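/- arXiv:2412.07855 — 3 statements merged into one kernel-verified Lean document; each statement's English description precedes it below -/
import Mathlib

section
/- Let A be the n×n upper-shift matrix, B = eₙ, λ > 0, K = η₁ᵀ(A+λI)ⁿ, and H the matrix with rows h_k = -η₁ᵀ(A+λI)^{k-1}. Then H(A - BK) = (A - λI)H, i.e., the closed-loop matrix A - BK is similar via H to A - λI. -/
open Matrix

/-- The upper-shift nilpotent matrix: ones on the superdiagonal. -/
noncomputable def upperShift (n : ℕ) : Matrix (Fin n) (Fin n) ℝ :=
  Matrix.of fun i j => if (j : ℕ) = (i : ℕ) + 1 then 1 else 0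

/-- The last standard basis vector `eₙ`. -/
noncomputable def lastBasis (n : ℕ) : Fin n → ℝ :=
  fun i => if (i : ℕ) = n - 1 then 1 else 0

/-!
Let `M = A + λI` and let `R` be the matrix with rows `η₁ᵀ Mᵏ`, so that `H = -R`. For any `M`,
right multiplication by `M` shifts the rows of `R` up by one, as does `A R` except in the last
row, which `B K` supplies: `R M = A R + B K` with `K = η₁ᵀ Mⁿ`. For `M = A + λI` the row `η₁ᵀ Mᵏ`
vanishes beyond position `k` and equals `1` there, so the last column of `R` is `eₙ`, i.e.
`R B = B`. Hence `R (A - B K) = R M - λ R - B K = A R - λ R = (A - λI) R`.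
-/

open Finset

def krylovRows (n : ℕ) {ι : Type*} [Fintype ι] [DecidableEq ι] (M : Matrix ι ι ℝ) (i₀ : ι) :
    Matrix (Fin n) ι ℝ :=
  of fun k => (M ^ (k : ℕ)) i₀

variable {n : ℕ}

theorem upperShift_mul_apply {ι : Type*} (P : Matrix (Fin n) ι ℝ) (i : Fin n) (j : ι) :
    (upperShift n * P) i j = if h : (i : ℕ) + 1 < n then P ⟨i + 1, h⟩ j else 0 := by
  simp only [mul_apply, upperShift, of_apply, ite_mul, one_mul, zero_mul]
  split_ifs with h
  · rw [sum_eq_single ⟨i + 1, h⟩ (fun m _ hm => if_neg fun hc => hm (Fin.ext hc)) (by simp),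
      if_pos rfl]
  · exact sum_eq_zero fun m _ => if_neg (by omega)

theorem mulVec_lastBasis {ι : Type*} [Fintype ι] (P : Matrix ι (Fin n) ℝ) (hn : 0 < n) :
    P *ᵥ lastBasis n = fun i => P i ⟨n - 1, by omega⟩ := by
  ext i
  simp only [mulVec, dotProduct, lastBasis, mul_ite, mul_one, mul_zero]
  rw [sum_eq_single ⟨n - 1, by omega⟩ (fun m _ hm => if_neg fun hc => hm (Fin.ext hc)) (by simp),
    if_pos rfl]

theorem pow_upperShift_add_smul_one_apply_of_le (lam : ℝ) (k : ℕ) {i j : Fin n}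
    (hij : (i : ℕ) + k ≤ j) :
    ((upperShift n + lam • (1 : Matrix (Fin n) (Fin n) ℝ)) ^ k) i j
      = if (j : ℕ) = i + k then 1 else 0 := by
  induction k generalizing i with
  | zero => simp [one_apply, Fin.ext_iff, eq_comm]
  | succ k ih =>
    have hi : (i : ℕ) + 1 < n := by omega
    rw [pow_succ', add_mul, smul_mul, one_mul, Matrix.add_apply, Matrix.smul_apply,
      upperShift_mul_apply, dif_pos hi, ih (i := ⟨i + 1, hi⟩) (by dsimp only; omega),
      ih (i := i) (by omega), if_neg (show (j : ℕ) ≠ i + k by omega)]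
    simp only [smul_zero, add_zero, add_assoc, add_comm 1 k]

theorem krylovRows_mul {ι : Type*} [Fintype ι] [DecidableEq ι] (M : Matrix ι ι ℝ) (i₀ : ι) :
    krylovRows n M i₀ * M
      = upperShift n * krylovRows n M i₀ + vecMulVec (lastBasis n) ((M ^ n) i₀) := by
  ext k j
  rw [Matrix.add_apply, upperShift_mul_apply (krylovRows n M i₀), vecMulVec_apply, lastBasis]
  simp only [krylovRows, of_apply, mul_apply]
  rw [← mul_apply, ← pow_succ]
  split_ifs with h hlast hlast
  · omega
  · simp
  · simp [show (k : ℕ) + 1 = n by omega]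
  · omega

theorem krylovRows_upperShift_add_smul_one_mulVec_lastBasis (hn : 0 < n) (lam : ℝ) :
    krylovRows n (upperShift n + lam • (1 : Matrix (Fin n) (Fin n) ℝ)) ⟨0, hn⟩ *ᵥ lastBasis n
      = lastBasis n := by
  ext k
  simp only [mulVec_lastBasis _ hn, krylovRows, of_apply]
  rw [pow_upperShift_add_smul_one_apply_of_le lam k (by dsimp only; omega), lastBasis]
  simp only [zero_add, eq_comm]

theorem stmt3_general (n : ℕ) (hn : 0 < n) (lam : ℝ)
    (A : Matrix (Fin n) (Fin n) ℝ) (hA : A = upperShift n)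
    (B : Fin n → ℝ) (hB : B = lastBasis n)
    (K : Fin n → ℝ)
    (hK : ∀ j, K j = ((A + lam • (1 : Matrix (Fin n) (Fin n) ℝ)) ^ n) ⟨0, hn⟩ j)
    (H : Matrix (Fin n) (Fin n) ℝ)
    (hH : ∀ k j : Fin n,
      H k j = -(((A + lam • (1 : Matrix (Fin n) (Fin n) ℝ)) ^ (k : ℕ)) ⟨0, hn⟩ j)) :
    H * (A - vecMulVec B K) = (A - lam • (1 : Matrix (Fin n) (Fin n) ℝ)) * H := by
  subst hA hB
  set M := upperShift n + lam • (1 : Matrix (Fin n) (Fin n) ℝ) with hM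
  set R := krylovRows n M ⟨0, hn⟩
  obtain rfl : K = (M ^ n) ⟨0, hn⟩ := funext hK
  obtain rfl : H = -R := by ext k j; simp [hH, R, krylovRows]
  calc -R * (upperShift n - vecMulVec (lastBasis n) ((M ^ n) ⟨0, hn⟩))
      = -(R * M) + lam • R + R * vecMulVec (lastBasis n) ((M ^ n) ⟨0, hn⟩) := by
        simp only [hM, neg_mul, mul_sub, mul_add, Matrix.mul_smul, mul_one]
        abel
    _ = (upperShift n - lam • (1 : Matrix (Fin n) (Fin n) ℝ)) * -R := by
        rw [krylovRows_mul, mul_vecMulVec, krylovRows_upperShift_add_smul_one_mulVec_lastBasis,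
          mul_neg, sub_mul, smul_mul, one_mul]
        abel

theorem stmt3 (n : ℕ) (hn : 0 < n) (lam : ℝ) (hlam : 0 < lam)
    (A : Matrix (Fin n) (Fin n) ℝ) (hA : A = upperShift n)
    (B : Fin n → ℝ) (hB : B = lastBasis n)
    (K : Fin n → ℝ)
    (hK : ∀ j, K j = ((A + lam • (1 : Matrix (Fin n) (Fin n) ℝ)) ^ n) ⟨0, hn⟩ j)
    (H : Matrix (Fin n) (Fin n) ℝ)
    (hH : ∀ k j : Fin n,
      H k j = -(((A + lam • (1 : Matrix (Fin n) (Fin n) ℝ)) ^ (k : ℕ)) ⟨0, hn⟩ j)) :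
    H * (A - vecMulVec B K) = (A - lam • (1 : Matrix (Fin n) (Fin n) ℝ)) * H :=
  stmt3_general n hn lam A hA B hB K hK H hH
end

section
/- Let A be the n×n upper-shift matrix, B = eₙ, K ∈ ℝ^{1×n}, μ ∈ ℝ, G = diag(1-μ(n-k))_{k=1}^n, d(s) = exp(sG), and let ‖·‖_d be a canonical homogeneous norm homogeneous of degree 1 with respect to d. Define f(x) = A x - ‖x‖_d^{1+μ} B K d(-ln‖x‖_d) x for x ≠ 0 and f(0) = 0. Then f is d-homogeneous of degree μ: f(d(s)x) = exp(μs)·d(s)·f(x) for all s ∈ ℝ and x ≠ 0. -/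
open Matrix

theorem stmt13 (n : ℕ) (μ : ℝ)
    (A : Matrix (Fin n) (Fin n) ℝ) (hA : A = upperShift n)
    (B : Fin n → ℝ) (hB : B = lastBasis n)
    (K : Fin n → ℝ)
    (d : ℝ → Matrix (Fin n) (Fin n) ℝ)
    (hd : ∀ s, d s =
      Matrix.diagonal (fun k : Fin n => Real.exp ((1 - μ * ((n : ℝ) - 1 - ((k : ℕ) : ℝ))) * s)))
    -- ν is a canonical homogeneous norm, homogeneous of degree 1 w.r.t. d
    (ν : (Fin n → ℝ) → ℝ) (hν0 : ν 0 = 0)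
    (hνpos : ∀ x : Fin n → ℝ, x ≠ 0 → 0 < ν x)
    (hνhom : ∀ (s : ℝ) (x : Fin n → ℝ), ν ((d s).mulVec x) = Real.exp s * ν x)
    (f : (Fin n → ℝ) → (Fin n → ℝ))
    (hf : ∀ x : Fin n → ℝ, x ≠ 0 →
      f x = A.mulVec x -
        ((ν x ^ (1 + μ) * (K ⬝ᵥ (d (-Real.log (ν x))).mulVec x)) • B))
    (hf0 : f 0 = 0) :
    ∀ (s : ℝ) (x : Fin n → ℝ), x ≠ 0 →
      f ((d s).mulVec x) = Real.exp (μ * s) • (d s).mulVec (f x) := by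
  intro s x hx
  have hn : 1 ≤ n := by
    by_contra h
    push_neg at h
    interval_cases n
    exact hx (Subsingleton.elim x 0)
  -- group property
  have hdd : ∀ (a b : ℝ) (v : Fin n → ℝ),
      (d a).mulVec ((d b).mulVec v) = (d (a + b)).mulVec v := by
    intro a b v
    funext i
    simp only [hd, Matrix.mulVec_diagonal, ← mul_assoc, ← Real.exp_add]
    ring_nf
  -- A d(s) = exp(μ s) d(s) A
  have hAd : A * d s = Real.exp (μ * s) • (d s * A) := by
    subst hA
    ext i j
    simp only [hd, Matrix.mul_diagonal, Matrix.diagonal_mul, Matrix.smul_apply,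
      smul_eq_mul, upperShift, Matrix.of_apply]
    by_cases h : (j : ℕ) = (i : ℕ) + 1
    · rw [if_pos h, one_mul, mul_one, ← Real.exp_add]
      congr 1
      have : ((j : ℕ) : ℝ) = ((i : ℕ) : ℝ) + 1 := by exact_mod_cast congrArg Nat.cast h
      rw [this]; ring
    · simp [h]
  -- d(s) B = exp(s) • B
  have hdB : (d s).mulVec B = Real.exp s • B := by
    subst hB
    funext i
    simp only [hd, Matrix.mulVec_diagonal, lastBasis, Pi.smul_apply, smul_eq_mul]
    by_cases h : (i : ℕ) = n - 1
    · simp only [h, if_pos rfl, mul_one]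
      congr 1
      have : ((n - 1 : ℕ) : ℝ) = (n : ℝ) - 1 := by
        push_cast [Nat.cast_sub hn]; ring
      rw [this]; ring
    · simp [h]
  have hxpos := hνpos x hx
  have hdsx : (d s).mulVec x ≠ 0 := by
    intro h
    have h1 := hνhom s x
    rw [h, hν0] at h1
    nlinarith [Real.exp_pos s]
  have hν : ν ((d s).mulVec x) = Real.exp s * ν x := hνhom s x
  have hlog : Real.log (ν ((d s).mulVec x)) = s + Real.log (ν x) := by
    rw [hν, Real.log_mul (Real.exp_ne_zero s) hxpos.ne', Real.log_exp]
  rw [hf _ hdsx, hf x hx, hlog]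
  have hdot : K ⬝ᵥ (d (-(s + Real.log (ν x)))).mulVec ((d s).mulVec x)
      = K ⬝ᵥ (d (-Real.log (ν x))).mulVec x := by
    rw [hdd]
    congr 2
    ring
  have hpow : ν ((d s).mulVec x) ^ (1 + μ) = Real.exp ((1 + μ) * s) * ν x ^ (1 + μ) := by
    rw [hν, Real.mul_rpow (Real.exp_pos s).le hxpos.le,
      Real.rpow_def_of_pos (Real.exp_pos s), Real.log_exp]
    ring_nf
  rw [hdot, hpow]
  have hAv : A.mulVec ((d s).mulVec x) = Real.exp (μ * s) • (d s).mulVec (A.mulVec x) := by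
    rw [Matrix.mulVec_mulVec, hAd, Matrix.smul_mulVec, ← Matrix.mulVec_mulVec]
  rw [hAv, Matrix.mulVec_sub, smul_sub]
  congr 1
  rw [Matrix.mulVec_smul, hdB]
  rw [smul_smul, smul_smul]
  congr 1
  rw [show (1 + μ) * s = μ * s + s by ring, Real.exp_add]
  ring
end

section
/- Let A be the n×n upper-shift matrix, λ > 0, μ ∈ [-1, 0), G = diag(1-μ(n-k))_{k=1}^n, and h_k = -η₁ᵀ(A+λI)^{k-1}. With Π = diag(-μ(n-k))_{k=1}^n, we have h_k·Π = -μ(n-k)·h_k - λμ(k-1)·h_{k-1} for k = 2,...,n, and consequently H·G = Γ·H where Γ = G + λ·diag(-μ(k-1))_{k=1}^n·Aᵀ. Moreover Γ ≥ 0 entrywise (since μ < 0) and Γ is anti-Hurwitz. -/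
open Matrix

lemma Bpow (n : ℕ) (hn : 0 < n) (lam : ℝ) :
    ∀ (k : ℕ) (j : Fin n),
      ((upperShift n + lam • (1 : Matrix (Fin n) (Fin n) ℝ)) ^ k) ⟨0, hn⟩ j
        = (k.choose (j : ℕ) : ℝ) * lam ^ (k - (j : ℕ)) := by
  intro k
  induction k with
  | zero =>
    intro j
    rcases Nat.eq_zero_or_pos (j : ℕ) with hj | hj
    · have : j = ⟨0, hn⟩ := Fin.ext hj
      simp [this]
    · have : (⟨0, hn⟩ : Fin n) ≠ j := by
        intro hcon
        rw [← hcon] at hj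
        simp at hj
      simp [Matrix.one_apply, this, Nat.choose_eq_zero_of_lt hj]
  | succ k ih =>
    intro j
    rw [pow_succ, Matrix.mul_apply]
    have hterm : ∀ l : Fin n,
        ((upperShift n + lam • (1 : Matrix (Fin n) (Fin n) ℝ)) ^ k) ⟨0, hn⟩ l *
          (upperShift n + lam • (1 : Matrix (Fin n) (Fin n) ℝ)) l j
        = (if (j : ℕ) = (l : ℕ) + 1 then (k.choose (l : ℕ) : ℝ) * lam ^ (k - (l : ℕ)) else 0)
          + (if l = j then lam * ((k.choose (l : ℕ) : ℝ) * lam ^ (k - (l : ℕ))) else 0) := by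
      intro l
      rw [ih l]
      simp only [Matrix.add_apply, Matrix.smul_apply, Matrix.one_apply, upperShift,
        Matrix.of_apply, smul_eq_mul]
      split_ifs <;> ring
    rw [Finset.sum_congr rfl (fun l _ => hterm l), Finset.sum_add_distrib]
    rw [Finset.sum_ite_eq' Finset.univ j
      (fun l => lam * ((k.choose (l : ℕ) : ℝ) * lam ^ (k - (l : ℕ))))]
    simp only [Finset.mem_univ, if_true]
    rcases Nat.eq_zero_or_pos (j : ℕ) with hj | hj
    · have hz : ∀ l : Fin n, l ∈ Finset.univ →
          (if (j : ℕ) = (l : ℕ) + 1 then (k.choose (l : ℕ) : ℝ) * lam ^ (k - (l : ℕ)) else 0) = 0 := by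
        intro l _
        rw [if_neg]
        omega
      rw [Finset.sum_eq_zero hz, hj]
      simp [pow_succ]
      ring
    · obtain ⟨m, hm⟩ := Nat.exists_eq_add_of_lt hj
      -- (j : ℕ) = m + 1 where uses 0 + m + 1
      have hjm : (j : ℕ) = m + 1 := by omega
      set j' : Fin n := ⟨m, by omega⟩ with hj'
      have hsingle : ∑ l : Fin n,
          (if (j : ℕ) = (l : ℕ) + 1 then (k.choose (l : ℕ) : ℝ) * lam ^ (k - (l : ℕ)) else 0)
          = (k.choose m : ℝ) * lam ^ (k - m) := by
        rw [Finset.sum_eq_single j']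
        · rw [if_pos (show (j : ℕ) = (j' : ℕ) + 1 from hjm)]
        · intro l _ hl
          rw [if_neg]
          intro hcon
          apply hl
          apply Fin.ext
          show (l : ℕ) = m
          omega
        · intro habs; exact absurd (Finset.mem_univ j') habs
      rw [hsingle, hjm, Nat.choose_succ_succ, Nat.succ_sub_succ]
      push_cast
      rcases Nat.lt_or_ge m k with hmk | hmk
      · have h1 : k - m = (k - (m+1)) + 1 := by omega
        rw [h1, pow_succ]
        ring
      · have h0 : k.choose (m + 1) = 0 := Nat.choose_eq_zero_of_lt (by omega)
        rcases Nat.eq_or_lt_of_le hmk with he | hlm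
        · subst he
          simp [h0]
        · have h1 : k.choose m = 0 := Nat.choose_eq_zero_of_lt hlm
          simp [h0, h1]

lemma keyid (lam : ℝ) (k j : ℕ) :
    ((k : ℝ) - (j : ℝ)) * ((k.choose j : ℝ) * lam ^ (k - j))
      = (lam * (k : ℝ)) * (((k - 1).choose j : ℝ) * lam ^ (k - 1 - j)) := by
  cases k with
  | zero =>
    rcases Nat.eq_zero_or_pos j with hj | hj
    · subst hj; simp
    · simp [Nat.choose_eq_zero_of_lt hj]
  | succ m =>
    simp only [Nat.succ_sub_one]
    rcases Nat.lt_or_ge m j with hmj | hmj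
    · rcases Nat.eq_or_lt_of_le hmj with he | hlt
      · -- j = m + 1
        rw [← he]
        push_cast
        rw [Nat.choose_eq_zero_of_lt (by omega : m < m + 1)]
        push_cast
        ring
      · rw [Nat.choose_eq_zero_of_lt (by omega : m + 1 < j),
          Nat.choose_eq_zero_of_lt (by omega : m < j)]
        push_cast
        ring
    · -- j ≤ m
      have hnat := Nat.choose_mul_succ_eq m j
      have hc : ((m.choose j : ℝ)) * ((m : ℝ) + 1) = ((m + 1).choose j : ℝ) * (((m : ℝ) + 1) - j) := by
        have h1 : ((m + 1 - j : ℕ) : ℝ) = ((m : ℝ) + 1) - j := by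
          have : j ≤ m + 1 := by omega
          push_cast [this]
          ring
        calc ((m.choose j : ℝ)) * ((m : ℝ) + 1) = ((m.choose j * (m + 1) : ℕ) : ℝ) := by push_cast; ring
          _ = (((m + 1).choose j * (m + 1 - j) : ℕ) : ℝ) := by rw [hnat]
          _ = ((m + 1).choose j : ℝ) * (((m : ℝ) + 1) - j) := by push_cast [h1]; ring
      have hp : lam ^ (m + 1 - j) = lam * lam ^ (m - j) := by
        have : m + 1 - j = (m - j) + 1 := by omega
        rw [this, pow_succ]; ring
      push_cast
      rw [hp]
      linear_combination (-(lam * lam ^ (m - j))) * hc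

theorem stmt17 (n : ℕ) (hn : 0 < n) (lam μ : ℝ) (hlam : 0 < lam)
    (hμ : -1 ≤ μ ∧ μ < 0)
    (A : Matrix (Fin n) (Fin n) ℝ) (hA : A = upperShift n)
    (G : Matrix (Fin n) (Fin n) ℝ)
    (hG : G = Matrix.diagonal (fun k : Fin n => 1 - μ * ((n : ℝ) - 1 - ((k : ℕ) : ℝ))))
    (Pi' : Matrix (Fin n) (Fin n) ℝ)
    (hPi : Pi' = Matrix.diagonal (fun k : Fin n => -μ * ((n : ℝ) - 1 - ((k : ℕ) : ℝ))))
    (h : Fin n → (Fin n → ℝ))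
    (hh : ∀ k j : Fin n,
      h k j = -(((A + lam • (1 : Matrix (Fin n) (Fin n) ℝ)) ^ (k : ℕ)) ⟨0, hn⟩ j))
    (Γ : Matrix (Fin n) (Fin n) ℝ)
    (hΓ : Γ = G + lam • (Matrix.diagonal (fun k : Fin n => -μ * ((k : ℕ) : ℝ)) * A.transpose))
    (H : Matrix (Fin n) (Fin n) ℝ) (hH : ∀ k : Fin n, H k = h k) :
    (∀ k : Fin n, 1 ≤ (k : ℕ) →
      h k ᵥ* Pi' =
        (-μ * ((n : ℝ) - 1 - ((k : ℕ) : ℝ))) • h k -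
          (lam * μ * ((k : ℕ) : ℝ)) • h ⟨(k : ℕ) - 1, lt_of_le_of_lt (Nat.sub_le _ _) k.isLt⟩) ∧
    H * G = Γ * H ∧
    (∀ i j : Fin n, 0 ≤ Γ i j) ∧
    (∀ z ∈ spectrum ℝ (-Γ), z < 0) := by
  have hB : ∀ (k j : Fin n),
      h k j = -((((k : ℕ)).choose (j : ℕ) : ℝ) * lam ^ ((k : ℕ) - (j : ℕ))) := by
    intro k j
    rw [hh k j, hA, Bpow n hn lam (k : ℕ) j]
  -- the main pointwise identity (valid for all k, including k = 0)
  have main : ∀ (k j : Fin n),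
      (-μ * ((n : ℝ) - 1 - ((j : ℕ) : ℝ))) * h k j
        = (-μ * ((n : ℝ) - 1 - ((k : ℕ) : ℝ))) * h k j
          - (lam * μ * ((k : ℕ) : ℝ)) *
              h ⟨(k : ℕ) - 1, lt_of_le_of_lt (Nat.sub_le _ _) k.isLt⟩ j := by
    intro k j
    have h1 := hB k j
    have h2 := hB ⟨(k : ℕ) - 1, lt_of_le_of_lt (Nat.sub_le _ _) k.isLt⟩ j
    have hk := keyid lam (k : ℕ) (j : ℕ)
    simp only [Fin.val_mk] at h2 ⊢
    rw [h1, h2]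
    linear_combination μ * hk
  -- entries of Γ
  have hΓe : ∀ (k l : Fin n),
      Γ k l = (if k = l then 1 - μ * ((n : ℝ) - 1 - ((k : ℕ) : ℝ)) else 0)
        + (if (k : ℕ) = (l : ℕ) + 1 then lam * (-μ * ((k : ℕ) : ℝ)) else 0) := by
    intro k l
    rw [hΓ, hG, hA]
    simp only [Matrix.add_apply, Matrix.smul_apply, Matrix.diagonal_apply,
      Matrix.diagonal_mul, Matrix.transpose_apply, upperShift, Matrix.of_apply, smul_eq_mul]
    split_ifs <;> ring
  refine ⟨?_, ?_, ?_, ?_⟩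
  · -- part 1
    intro k _
    funext j
    rw [hPi, Matrix.vecMul_diagonal]
    simp only [Pi.sub_apply, Pi.smul_apply, smul_eq_mul]
    have := main k j
    linarith [this]
  · -- part 2: H * G = Γ * H
    ext k j
    rw [hG, Matrix.mul_diagonal, Matrix.mul_apply]
    have hsum : ∑ l : Fin n, Γ k l * H l j
        = (1 - μ * ((n : ℝ) - 1 - ((k : ℕ) : ℝ))) * h k j
          + lam * (-μ * ((k : ℕ) : ℝ)) *
              h ⟨(k : ℕ) - 1, lt_of_le_of_lt (Nat.sub_le _ _) k.isLt⟩ j := by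
      have hterm : ∀ l : Fin n, Γ k l * H l j
          = (if k = l then (1 - μ * ((n : ℝ) - 1 - ((k : ℕ) : ℝ))) * h l j else 0)
            + (if (k : ℕ) = (l : ℕ) + 1 then lam * (-μ * ((k : ℕ) : ℝ)) * h l j else 0) := by
        intro l
        rw [hΓe k l, hH l]
        split_ifs <;> ring
      rw [Finset.sum_congr rfl (fun l _ => hterm l), Finset.sum_add_distrib,
        Finset.sum_ite_eq Finset.univ k (fun l => (1 - μ * ((n : ℝ) - 1 - ((k : ℕ) : ℝ))) * h l j)]
      simp only [Finset.mem_univ, if_true]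
      congr 1
      rcases Nat.eq_zero_or_pos (k : ℕ) with hk0 | hk0
      · have hz : ∀ l : Fin n, l ∈ Finset.univ →
            (if (k : ℕ) = (l : ℕ) + 1 then lam * (-μ * ((k : ℕ) : ℝ)) * h l j else 0) = 0 := by
          intro l _
          rw [if_neg]; omega
        rw [Finset.sum_eq_zero hz]
        have hk0' : (((k : ℕ)) : ℝ) = 0 := by rw [hk0]; norm_num
        rw [hk0']
        ring
      · rw [Finset.sum_eq_single (⟨(k : ℕ) - 1, lt_of_le_of_lt (Nat.sub_le _ _) k.isLt⟩ : Fin n)]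
        · rw [if_pos]
          show (k : ℕ) = ((k : ℕ) - 1) + 1
          omega
        · intro l _ hl
          rw [if_neg]
          intro hcon
          apply hl
          apply Fin.ext
          show (l : ℕ) = (k : ℕ) - 1
          omega
        · intro habs; exact absurd (Finset.mem_univ _) habs
    rw [hsum, hH k]
    have := main k j
    linarith [this]
  · -- part 3: nonnegativity
    intro i j
    rw [hΓe i j]
    have h1 : ((i : ℕ) : ℝ) ≤ (n : ℝ) - 1 := by
      have := i.isLt
      have : ((i : ℕ) : ℝ) + 1 ≤ (n : ℝ) := by exact_mod_cast this
      linarith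
    have h2 : (0 : ℝ) ≤ -μ := by linarith [hμ.2]
    have h3 : (0:ℝ) ≤ -μ * ((n:ℝ) - 1 - ((i:ℕ):ℝ)) := mul_nonneg h2 (by linarith)
    have h4 : (0:ℝ) ≤ lam * (-μ * ((i:ℕ):ℝ)) :=
      mul_nonneg hlam.le (mul_nonneg h2 (by positivity))
    split_ifs with hc1 hc2 hc2 <;> linarith [h3, h4]
  · -- part 4: anti-Hurwitz
    intro z hz
    rw [spectrum.mem_iff] at hz
    by_contra hznn
    push_neg at hznn
    apply hz
    have hlt : BlockTriangular (algebraMap ℝ (Matrix (Fin n) (Fin n) ℝ) z - (-Γ)) OrderDual.toDual := by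
      intro i j hij
      have hij' : i < j := hij
      simp only [Matrix.sub_apply, Matrix.neg_apply, Matrix.algebraMap_matrix_apply]
      rw [hΓe i j, if_neg (Fin.ne_of_lt hij'), if_neg (by omega : ¬ (i : ℕ) = (j : ℕ) + 1),
        if_neg (Fin.ne_of_lt hij')]
      ring
    rw [Matrix.isUnit_iff_isUnit_det, Matrix.det_of_lowerTriangular _ hlt]
    apply isUnit_iff_ne_zero.mpr
    rw [Finset.prod_ne_zero_iff]
    intro i _
    have hdiag : ((algebraMap ℝ (Matrix (Fin n) (Fin n) ℝ)) z - -Γ) i i = z + Γ i i := by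
      simp [Matrix.algebraMap_matrix_apply]
    rw [hdiag, hΓe i i, if_pos rfl, if_neg (by omega : ¬ (i : ℕ) = (i : ℕ) + 1)]
    have h1 : ((i : ℕ) : ℝ) ≤ (n : ℝ) - 1 := by
      have := i.isLt
      have : ((i : ℕ) : ℝ) + 1 ≤ (n : ℝ) := by exact_mod_cast this
      linarith
    intro h0
    nlinarith [hμ.2, h1, hznn]
end
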